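/- Let I ⊆ R be a monomial ideal with linear quotients whose decomposition function b is regular, let m ∈ G(I), α ⊆ set(m) with |α| = p, and let σ be a permutation of α such that ch(m,α,σ) is nondegenerate, with vertex monomials m_0 = m and m_i = b(x_{σ_i} · m_{i−1}). Then for all indices 1 ≤ j < ℓ ≤ p one has m_j ≠ x_{σ_j} · m_{j−1} / x_{σ_ℓ}; that is, the exponent vector of b(x_{σ_j} · m_{j−1}) is never equal to the exponent vector of m_{j−1} plus the standard basis vector e_{σ_j} minus the standard basis vector e_{σ_ℓ}. -/

import Mathlib

/-!
Nondegeneracy forces `m_i ≠ m_{i-1}`, i.e. `b(x_{σ_i} m_{i-1}) ≠ m_{i-1}`, and for the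
decomposition function this means `σ_i ∈ set(m_{i-1})`. Regularity then makes
`set(m_0) ⊇ set(m_1) ⊇ ⋯`, so `σ_ℓ ∈ set(m_{ℓ-1}) ⊆ set(m_j)` whenever `j < ℓ`. If
`x_{σ_ℓ} m_j = x_{σ_j} m_{j-1} =: u`, then `m_j = b(u)` and `σ_ℓ ∈ set(b(u))` give a generator
`m_i` with `i < b(u)` dividing `u`, contradicting the minimality of `b(u)`.
-/

open MvPolynomial

/-- The monomial ideal generated by a set of exponent vectors. -/
noncomputable def genIdeal (K : Type*) [Field K] {n : ℕ} (ms : Set (Fin n →₀ ℕ)) :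
    Ideal (MvPolynomial (Fin n) K) :=
  Ideal.span ((fun u => MvPolynomial.monomial u (1 : K)) '' ms)

/-- The colon ideal `⟨m_1, …, m_{j-1}⟩ : m_j`. -/
noncomputable def colonJ (K : Type*) [Field K] {n k : ℕ} (m : Fin k → (Fin n →₀ ℕ))
    (j : Fin k) : Ideal (MvPolynomial (Fin n) K) :=
  Submodule.colon (genIdeal K {u | ∃ i : Fin k, i < j ∧ u = m i})
    (Ideal.span {MvPolynomial.monomial (m j) (1 : K)})

/-- `I` has linear quotients w.r.t. the ordering `m_1,…,m_k` of its generators: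
each colon ideal is generated by a subset of the variables. -/
def HasLinearQuotients (K : Type*) [Field K] {n k : ℕ}
    (m : Fin k → (Fin n →₀ ℕ)) : Prop :=
  ∀ j : Fin k, ∃ S : Set (Fin n),
    colonJ K m j = Ideal.span ((fun s => (MvPolynomial.X s : MvPolynomial (Fin n) K)) '' S)

/-- `set(m_j) = {i : x_i ∈ ⟨m_1,…,m_{j-1}⟩ : m_j}`. -/
def mset (K : Type*) [Field K] {n k : ℕ} (m : Fin k → (Fin n →₀ ℕ)) (j : Fin k) :
    Set (Fin n) :=
  {t | (MvPolynomial.X t : MvPolynomial (Fin n) K) ∈ colonJ K m j}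

/-- The `m i` are minimal monomial generators: none divides another. -/
def MinimalGens {n k : ℕ} (m : Fin k → (Fin n →₀ ℕ)) : Prop :=
  ∀ i j : Fin k, m i ≤ m j → i = j

/-- `b` is the decomposition function: for a monomial `u ∈ I`, `b u` is the smallest
index `j` with `u ∈ ⟨m_1,…,m_j⟩`. -/
def IsDecompositionFunction (K : Type*) [Field K] {n k : ℕ}
    (m : Fin k → (Fin n →₀ ℕ)) (b : (Fin n →₀ ℕ) → Fin k) : Prop :=
  ∀ u : Fin n →₀ ℕ, MvPolynomial.monomial u (1 : K) ∈ genIdeal K (Set.range m) →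
    (MvPolynomial.monomial u (1 : K) ∈ genIdeal K {v | ∃ i : Fin k, i ≤ b u ∧ v = m i}) ∧
    (∀ j : Fin k,
      MvPolynomial.monomial u (1 : K) ∈ genIdeal K {v | ∃ i : Fin k, i ≤ j ∧ v = m i} →
      b u ≤ j)

/-- The decomposition function is regular: `set(b(x_t·m)) ⊆ set(m)` for every
generator `m` and every `t ∈ set(m)`. -/
def IsRegularDecomp (K : Type*) [Field K] {n k : ℕ}
    (m : Fin k → (Fin n →₀ ℕ)) (b : (Fin n →₀ ℕ) → Fin k) : Prop :=
  ∀ j : Fin k, ∀ t ∈ mset K m j,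
    mset K m (b (m j + Finsupp.single t 1)) ⊆ mset K m j

/-- The sequence of vertex monomials `m_0 = m₀`, `m_{i+1} = b(x_{σ(i)} · m_i)` of the
simplex `ch(m, α, σ)` (here `σ` is 0-indexed: `σ 0, …, σ (p-1)` is the permutation). -/
noncomputable def chainSeq {n k : ℕ} (m : Fin k → (Fin n →₀ ℕ)) (b : (Fin n →₀ ℕ) → Fin k)
    (m0 : Fin n →₀ ℕ) (σ : ℕ → Fin n) : ℕ → (Fin n →₀ ℕ)
  | 0 => m0
  | i + 1 => m (b (chainSeq m b m0 σ i + Finsupp.single (σ i) 1))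

/-- `σ 0, …, σ (p-1)` is a permutation (an ordering) of the finite set `α`. -/
def PermOf {n : ℕ} (σ : ℕ → Fin n) (p : ℕ) (α : Finset (Fin n)) : Prop :=
  Set.InjOn σ (Set.Iio p) ∧ ∀ a : Fin n, a ∈ α ↔ ∃ i < p, σ i = a

/-- `ch(m,α,σ)` is nondegenerate: the vertex monomials `m_0, …, m_p` are pairwise
distinct. -/
def Nondeg {n k : ℕ} (m : Fin k → (Fin n →₀ ℕ)) (b : (Fin n →₀ ℕ) → Fin k)
    (m0 : Fin n →₀ ℕ) (σ : ℕ → Fin n) (p : ℕ) : Prop :=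
  Set.InjOn (chainSeq m b m0 σ) (Set.Iic p)

/-- A monomial (exponent vector) regarded as a point of `ℝⁿ`. -/
def toR {n : ℕ} (u : Fin n →₀ ℕ) : Fin n → ℝ := fun a => (u a : ℝ)

/-- The set of vertex monomials of `ch(m,α,σ)`. -/
def vertSet {n k : ℕ} (m : Fin k → (Fin n →₀ ℕ)) (b : (Fin n →₀ ℕ) → Fin k)
    (m0 : Fin n →₀ ℕ) (σ : ℕ → Fin n) (p : ℕ) : Set (Fin n →₀ ℕ) :=
  {v | ∃ i ≤ p, v = chainSeq m b m0 σ i}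

open Finsupp

lemma monomial_mem_genIdeal_iff {K : Type*} [Field K] {n : ℕ} {S : Set (Fin n →₀ ℕ)}
    {u : Fin n →₀ ℕ} : monomial u (1 : K) ∈ genIdeal K S ↔ ∃ v ∈ S, v ≤ u := by
  rw [genIdeal, mem_ideal_span_monomial_image]
  simp

lemma mem_mset_iff {K : Type*} [Field K] {n k : ℕ} {m : Fin k → (Fin n →₀ ℕ)} {j : Fin k}
    {t : Fin n} : t ∈ mset K m j ↔ ∃ i < j, m i ≤ m j + single t 1 := by
  rw [mset, Set.mem_ofPred_eq, colonJ, Ideal.span, Submodule.mem_colon_span_singleton,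
    smul_eq_mul, X, monomial_mul, one_mul, add_comm, monomial_mem_genIdeal_iff]
  constructor
  · rintro ⟨_, ⟨i, hi, rfl⟩, hle⟩
    exact ⟨i, hi, hle⟩
  · rintro ⟨i, hi, hle⟩
    exact ⟨m i, ⟨i, hi, rfl⟩, hle⟩

namespace IsDecompositionFunction

variable {K : Type*} [Field K] {n k : ℕ} {m : Fin k → (Fin n →₀ ℕ)} {b : (Fin n →₀ ℕ) → Fin k}

lemma le_of_le (hb : IsDecompositionFunction K m b) {u : Fin n →₀ ℕ} {i : Fin k}
    (h : m i ≤ u) : b u ≤ i :=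
  (hb u (monomial_mem_genIdeal_iff.mpr ⟨m i, ⟨i, rfl⟩, h⟩)).2 i
    (monomial_mem_genIdeal_iff.mpr ⟨m i, ⟨i, le_rfl, rfl⟩, h⟩)

lemma exists_le (hb : IsDecompositionFunction K m b) {u : Fin n →₀ ℕ} {i : Fin k}
    (h : m i ≤ u) : ∃ i' ≤ b u, m i' ≤ u := by
  obtain ⟨_, ⟨i', hi', rfl⟩, hle⟩ := monomial_mem_genIdeal_iff.mp
    (hb u (monomial_mem_genIdeal_iff.mpr ⟨m i, ⟨i, rfl⟩, h⟩)).1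
  exact ⟨i', hi', hle⟩

lemma mem_mset_of_ne (hb : IsDecompositionFunction K m b) {j : Fin k} {t : Fin n}
    (h : b (m j + single t 1) ≠ j) : t ∈ mset K m j := by
  have hle : m j ≤ m j + single t 1 := le_self_add
  obtain ⟨i, hi, hiu⟩ := hb.exists_le hle
  exact mem_mset_iff.mpr ⟨i, hi.trans_lt ((hb.le_of_le hle).lt_of_ne h), hiu⟩

lemma notMem_mset_of_add_single_eq (hb : IsDecompositionFunction K m b) {u : Fin n →₀ ℕ}
    {t : Fin n} (h : m (b u) + single t 1 = u) : t ∉ mset K m (b u) := by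
  intro ht
  obtain ⟨i, hi, hiu⟩ := mem_mset_iff.mp ht
  exact (hb.le_of_le (h ▸ hiu)).not_gt hi

end IsDecompositionFunction

section Chain

variable {K : Type*} [Field K] {n k : ℕ} {m : Fin k → (Fin n →₀ ℕ)} {b : (Fin n →₀ ℕ) → Fin k}
  {σ : ℕ → Fin n} {j : Fin k} {p : ℕ}

noncomputable def chainIdx (m : Fin k → (Fin n →₀ ℕ)) (b : (Fin n →₀ ℕ) → Fin k)
    (σ : ℕ → Fin n) (j : Fin k) : ℕ → Fin k
  | 0 => j
  | i + 1 => b (chainSeq m b (m j) σ i + single (σ i) 1)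

lemma chainSeq_eq_chainIdx : ∀ i, chainSeq m b (m j) σ i = m (chainIdx m b σ j i)
  | 0 => rfl
  | _ + 1 => rfl

lemma chainIdx_succ (i : ℕ) :
    chainIdx m b σ j (i + 1) = b (m (chainIdx m b σ j i) + single (σ i) 1) := by
  rw [chainIdx, chainSeq_eq_chainIdx]

lemma mem_mset_chainIdx (hb : IsDecompositionFunction K m b) (hnd : Nondeg m b (m j) σ p)
    {i : ℕ} (hi : i < p) : σ i ∈ mset K m (chainIdx m b σ j i) := by
  apply hb.mem_mset_of_ne
  intro hstep
  have hseq : chainSeq m b (m j) σ (i + 1) = chainSeq m b (m j) σ i := by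
    rw [chainSeq_eq_chainIdx, chainSeq_eq_chainIdx, chainIdx_succ, hstep]
  exact i.succ_ne_self (hnd (Set.mem_Iic.mpr hi) (Set.mem_Iic.mpr hi.le) hseq)

lemma mset_chainIdx_antitone (hb : IsDecompositionFunction K m b)
    (hreg : IsRegularDecomp K m b) (hnd : Nondeg m b (m j) σ p) {a e : ℕ} (hae : a ≤ e)
    (hep : e ≤ p) : mset K m (chainIdx m b σ j e) ⊆ mset K m (chainIdx m b σ j a) := by
  induction e, hae using Nat.le_induction with
  | base => rfl
  | succ e _ ih =>
    have hstep := hreg _ _ (mem_mset_chainIdx hb hnd hep)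
    rw [chainIdx_succ]
    exact hstep.trans (ih (by omega))

end Chain

-- Indices are 0-based: the paper's `j` and `ℓ` are `a + 1` and `c + 1`.
theorem stmt2_general (K : Type*) [Field K] {n k : ℕ} (m : Fin k → (Fin n →₀ ℕ))
    (b : (Fin n →₀ ℕ) → Fin k) (hb : IsDecompositionFunction K m b)
    (hreg : IsRegularDecomp K m b)
    (j : Fin k)
    (p : ℕ)
    (σ : ℕ → Fin n)
    (hnd : Nondeg m b (m j) σ p) :
    ∀ a c : ℕ, a < c → c < p →
      chainSeq m b (m j) σ (a + 1) + Finsupp.single (σ c) 1 ≠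
        chainSeq m b (m j) σ a + Finsupp.single (σ a) 1 := by
  intro a c hac hcp heq
  have hσc : σ c ∈ mset K m (chainIdx m b σ j (a + 1)) :=
    mset_chainIdx_antitone hb hreg hnd hac hcp.le (mem_mset_chainIdx hb hnd hcp)
  exact hb.notMem_mset_of_add_single_eq heq hσc

/-- if `ch(m,α,σ)` is nondegenerate, then for `1 ≤ j < ℓ ≤ p` the monomial
`m_j = b(x_{σ_j}·m_{j-1})` never equals `x_{σ_j}·m_{j-1}/x_{σ_ℓ}`; equivalently (in ℤⁿ)
`m_j + e_{σ_ℓ} ≠ m_{j-1} + e_{σ_j}`.  (Here indices are 0-based: the paper's `j` is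
`a+1` and `ℓ` is `c+1`.) -/
theorem stmt2 (K : Type*) [Field K] {n k : ℕ} (m : Fin k → (Fin n →₀ ℕ))
    (hmin : MinimalGens m) (hlq : HasLinearQuotients K m)
    (b : (Fin n →₀ ℕ) → Fin k) (hb : IsDecompositionFunction K m b)
    (hreg : IsRegularDecomp K m b)
    (j : Fin k) (α : Finset (Fin n)) (hα : ↑α ⊆ mset K m j)
    (p : ℕ) (hcard : α.card = p)
    (σ : ℕ → Fin n) (hσ : PermOf σ p α)
    (hnd : Nondeg m b (m j) σ p) :
    ∀ a c : ℕ, a < c → c < p →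
      chainSeq m b (m j) σ (a + 1) + Finsupp.single (σ c) 1 ≠
        chainSeq m b (m j) σ a + Finsupp.single (σ a) 1 :=
  stmt2_general K m b hb hreg j p σ hnd
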